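/- Let μ be a probability measure on ℝ^d absolutely continuous with respect to Lebesgue measure, let η be a Poisson point process on ℝ^d with intensity measure tμ for t > 0, and let Π_t be the convex hull of the points of η. For x, y ≥ 0 with x + y = 1, let η_{xt} and η̄_{yt} be independent Poisson point processes with intensity measures xtμ and ytμ respectively, and let Π_{xt} be the convex hull of the points of η_{xt}. Then the probability that all vertices of the convex hull of η_{xt} + η̄_{yt} belong to η_{xt} equals E[e^{−yt·Δ(Π_{xt})}], where Δ(Π_{xt}) = 1 − μ(Π_{xt}). -/

import Mathlib

open MeasureTheory ProbabilityTheory Set Filter Asymptotics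
open scoped ENNReal NNReal RealInnerProductSpace Topology

noncomputable section

/-- Euclidean space `ℝ^d`. -/
abbrev Euc (d : ℕ) := EuclideanSpace ℝ (Fin d)

/-- The number of points of a finite point configuration `ξ` lying in the set `A`. -/
def nPts {d : ℕ} (ξ : Finset (Euc d)) (A : Set (Euc d)) : ℕ :=
  ((ξ : Set (Euc d)) ∩ A).ncard

/-- `η` is a Poisson point process on `ℝ^d` with (finite) intensity measure `ν`, defined on
the probability space `(Ω, P)`: for every Borel set `A` the number of points in `A` is
Poisson distributed with parameter `ν A`, and the counts on pairwise disjoint Borel sets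
are independent. -/
structure IsPoissonPP {d : ℕ} {Ω : Type*} [MeasurableSpace Ω] (P : Measure Ω)
    (ν : Measure (Euc d)) (η : Ω → Finset (Euc d)) : Prop where
  measurable_count : ∀ A : Set (Euc d), MeasurableSet A →
    Measurable (fun ω => nPts (η ω) A)
  poisson_count : ∀ A : Set (Euc d), MeasurableSet A →
    P.map (fun ω => nPts (η ω) A) = poissonMeasure (ν A).toNNReal
  indep_counts : ∀ {ι : Type} (A : ι → Set (Euc d)), (∀ i, MeasurableSet (A i)) →
    Pairwise (Function.onFun Disjoint A) →
    iIndepFun (fun i ω => nPts (η ω) (A i)) P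

/-- The convex hull `[ξ]` of a finite point configuration `ξ`. -/
def hull {d : ℕ} (ξ : Finset (Euc d)) : Set (Euc d) :=
  convexHull ℝ (ξ : Set (Euc d))

/-- The number `I` of points of `ξ` lying in the interior of the convex hull of `ξ`
(the "inner points"). -/
def innerCount {d : ℕ} (ξ : Finset (Euc d)) : ℕ :=
  nPts ξ (interior (hull ξ))

/-- The number `N` of points of `ξ` not lying in the interior of the convex hull of `ξ`
(the vertices of the convex hull). -/
def vertexCount {d : ℕ} (ξ : Finset (Euc d)) : ℕ :=
  nPts ξ (interior (hull ξ))ᶜ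

instance {d : ℕ} : MeasurableSpace (Finset (Euc d)) := ⊤

/-!
Every vertex of the hull of `η₁ + η₂` lies in `η₁` as soon as `η₂ ⊆ int [η₁]`, and only if
`η₂ ⊆ [η₁]`, by Krein–Milman. Given `η₁`, the void probability of the Poisson process `η₂` on
the complement of such a set `K` is `exp (-yt μ Kᶜ)`, and the boundary of the convex set `[η₁]`
is `μ`-null, so both bounds have probability `E exp (-yt Δ(Π_{xt}))`. Conditioning on `η₁` is
Fubini for the joint law of the independent pair, on the σ-algebra generated by the events
`ξ ⊆ C`: both events above are measurable for it, since countably many half-spaces cut out the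
hull of any finite set and countably many basic open sets exhaust its interior.
-/

theorem TopologicalSpace.IsTopologicalBasis.exists_finite_sUnion_between {X : Type*}
    [TopologicalSpace X] {B : Set (Set X)} (hB : TopologicalSpace.IsTopologicalBasis B)
    {s U : Set X} (hs : IsCompact s) (hU : IsOpen U) (hsU : s ⊆ U) :
    ∃ T ⊆ B, T.Finite ∧ s ⊆ ⋃₀ T ∧ ⋃₀ T ⊆ U := by
  have hcover : s ⊆ ⋃ u ∈ {u ∈ B | u ⊆ U}, u := by
    rwa [← Set.sUnion_eq_biUnion, ← hB.open_eq_sUnion' hU]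
  obtain ⟨T, hT, hTfin, hsT⟩ :=
    hs.elim_finite_subcover_image (fun u hu => hB.isOpen hu.1) hcover
  refine ⟨T, fun u hu => (hT hu).1, hTfin, ?_, Set.sUnion_subset fun u hu => (hT hu).2⟩
  rwa [Set.sUnion_eq_biUnion]

section Disintegration

variable {Ω α β : Type*} {_ : MeasurableSpace Ω} {P : Measure Ω} {_ : MeasurableSpace α}
  {_ : MeasurableSpace β} {X : Ω → α} {Y : Ω → β} {S : Set (α × β)}

theorem MeasureTheory.Measure.map_apply_preimage_prodMk (hY : Measurable Y)
    (hS : MeasurableSet S) (a : α) :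
    P.map Y (Prod.mk a ⁻¹' S) = P {ω | (a, Y ω) ∈ S} :=
  Measure.map_apply hY (measurable_prodMk_left hS)

theorem ProbabilityTheory.IndepFun.measure_mem_eq_lintegral [IsFiniteMeasure P]
    (hXY : IndepFun X Y P) (hX : Measurable X) (hY : Measurable Y) (hS : MeasurableSet S) :
    P {ω | (X ω, Y ω) ∈ S} = ∫⁻ ω, P {ω' | (X ω, Y ω') ∈ S} ∂P := by
  calc P {ω | (X ω, Y ω) ∈ S} = P.map (fun ω => (X ω, Y ω)) S :=
        (Measure.map_apply (hX.prodMk hY) hS).symm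
    _ = (P.map X).prod (P.map Y) S := by
        rw [(indepFun_iff_map_prod_eq_prod_map_map hX.aemeasurable hY.aemeasurable).mp hXY]
    _ = ∫⁻ a, P.map Y (Prod.mk a ⁻¹' S) ∂P.map X := Measure.prod_apply hS
    _ = ∫⁻ ω, P.map Y (Prod.mk (X ω) ⁻¹' S) ∂P :=
        lintegral_map (measurable_measure_prodMk_left hS) hX
    _ = ∫⁻ ω, P {ω' | (X ω, Y ω') ∈ S} ∂P := by
        simp_rw [Measure.map_apply_preimage_prodMk hY hS]

theorem measurable_measure_prodMk_mem [SFinite P] (hX : Measurable X) (hY : Measurable Y)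
    (hS : MeasurableSet S) :
    Measurable fun ω => P {ω' | (X ω, Y ω') ∈ S} := by
  simp_rw [← Measure.map_apply_preimage_prodMk hY hS]
  exact (measurable_measure_prodMk_left hS).comp hX

end Disintegration

section Geometry

open TopologicalSpace

theorem forall_notMem_interior_of_subset_interior {E : Type*} [AddCommGroup E] [Module ℝ E]
    [TopologicalSpace E] {s t : Set E} (h : t ⊆ interior (convexHull ℝ s)) :
    ∀ p ∈ s ∪ t, p ∉ interior (convexHull ℝ (s ∪ t)) → p ∈ s := by
  rintro p (hps | hpt) hp
  · exact hps
  · exact absurd (interior_mono (convexHull_mono Set.subset_union_left) (h hpt)) hp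

variable {E : Type*} [NormedAddCommGroup E]

theorem subset_convexHull_of_forall_notMem_interior [NormedSpace ℝ E] [Nontrivial E]
    {s t : Set E} (hs : s.Finite) (ht : t.Finite)
    (h : ∀ p ∈ s ∪ t, p ∉ interior (convexHull ℝ (s ∪ t)) → p ∈ s) :
    t ⊆ convexHull ℝ s := by
  set C := convexHull ℝ (s ∪ t)
  have hext : C.extremePoints ℝ ⊆ s := fun p hp =>
    h p (extremePoints_convexHull_subset hp)
      (Set.disjoint_right.mp (disjoint_interior_extremePoints C) hp)
  have hC : C ⊆ convexHull ℝ s := by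
    calc C = closure (convexHull ℝ (C.extremePoints ℝ)) :=
          (closure_convexHull_extremePoints ((hs.union ht).isCompact_convexHull ℝ)
            (convex_convexHull ℝ _)).symm
      _ ⊆ convexHull ℝ s := closure_minimal (convexHull_mono hext) (hs.isClosed_convexHull ℝ)
  exact Set.subset_union_right.trans ((subset_convexHull ℝ _).trans hC)

variable [InnerProductSpace ℝ E] [SeparableSpace E]

variable (E) in
def denseHalfSpace (i : ℕ) : Set E :=
  {z | ⟪(denseSeq (E × ℝ) i).1, z⟫ ≤ (denseSeq (E × ℝ) i).2}

theorem convex_denseHalfSpace (i : ℕ) : Convex ℝ (denseHalfSpace E i) :=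
  convex_halfSpace_le (innerₛₗ ℝ _).isLinear _

theorem isClosed_denseHalfSpace (i : ℕ) : IsClosed (denseHalfSpace E i) :=
  isClosed_le (continuous_const.inner continuous_id) continuous_const

theorem exists_denseHalfSpace_separating [CompleteSpace E] {s : Set E} (hs : s.Finite) {z : E}
    (hz : z ∉ convexHull ℝ s) : ∃ i, s ⊆ denseHalfSpace E i ∧ z ∉ denseHalfSpace E i := by
  obtain ⟨f, u, hfu, huz⟩ := geometric_hahn_banach_closed_point (convex_convexHull ℝ s)
    (hs.isClosed_convexHull ℝ) hz
  set v := (InnerProductSpace.toDual ℝ E).symm f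
  have hv (p : E) : ⟪v, p⟫ = f p := InnerProductSpace.toDual_symm_apply
  -- Strict separation of the finitely many points of `s` is an open condition on `(v, u)`.
  let G : Set (E × ℝ) :=
    (⋂ p ∈ s, {vc : E × ℝ | ⟪vc.1, p⟫ < vc.2}) ∩ {vc : E × ℝ | vc.2 < ⟪vc.1, z⟫}
  have hinner (p : E) : Continuous fun vc : E × ℝ => ⟪vc.1, p⟫ :=
    continuous_fst.inner continuous_const
  have hG : IsOpen G :=
    (hs.isOpen_biInter fun p _ => isOpen_lt (hinner p) continuous_snd).inter
      (isOpen_lt continuous_snd (hinner z))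
  have hvu : (v, u) ∈ G := by
    simp only [G, Set.mem_inter_iff, Set.mem_iInter, Set.mem_ofPred_eq, hv]
    exact ⟨fun p hp => hfu p (subset_convexHull ℝ s hp), huz⟩
  obtain ⟨i, hi⟩ := (denseRange_denseSeq (E × ℝ)).exists_mem_open hG ⟨_, hvu⟩
  simp only [G, Set.mem_inter_iff, Set.mem_iInter, Set.mem_ofPred_eq] at hi
  exact ⟨i, fun p hp => (hi.1 p hp).le, not_le.mpr hi.2⟩

theorem subset_convexHull_iff_forall_denseHalfSpace [CompleteSpace E] {s : Set E}
    (hs : s.Finite) {K : Set E} :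
    K ⊆ convexHull ℝ s ↔ ∀ i, s ⊆ denseHalfSpace E i → K ⊆ denseHalfSpace E i := by
  refine ⟨fun hK i hi => hK.trans (convexHull_min hi (convex_denseHalfSpace i)), fun h z hz => ?_⟩
  by_contra hzs
  obtain ⟨i, hsi, hzi⟩ := exists_denseHalfSpace_separating hs hzs
  exact hzi (h i hsi hz)

end Geometry

section PointProcess

variable {d : ℕ} {Ω : Type*} [mΩ : MeasurableSpace Ω] {P : Measure Ω}
  {ν : Measure (Euc d)} {η : Ω → Finset (Euc d)}

theorem isClosed_hull (a : Finset (Euc d)) : IsClosed (hull a) :=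
  a.finite_toSet.isClosed_convexHull ℝ

theorem measure_compl_interior_hull (hν : ν ≪ volume) (a : Finset (Euc d)) :
    ν (interior (hull a))ᶜ = ν (hull a)ᶜ :=
  measure_congr (interior_ae_eq_of_null_frontier
    (hν ((convex_convexHull ℝ _).addHaar_frontier volume))).compl

theorem nPts_compl_eq_zero_iff (ξ : Finset (Euc d)) (C : Set (Euc d)) :
    nPts ξ Cᶜ = 0 ↔ (ξ : Set (Euc d)) ⊆ C := by
  rw [nPts, Set.ncard_eq_zero (Set.toFinite _), ← Set.disjoint_iff_inter_eq_empty,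
    Set.disjoint_compl_right_iff_subset]

theorem IsPoissonPP.measure_subset (hη : IsPoissonPP P ν η) {C : Set (Euc d)}
    (hC : MeasurableSet C) :
    P {ω | (η ω : Set (Euc d)) ⊆ C} = ENNReal.ofReal (Real.exp (-(ν Cᶜ).toReal)) := by
  have hpre : {ω | (η ω : Set (Euc d)) ⊆ C} = (fun ω => nPts (η ω) Cᶜ) ⁻¹' {0} := by
    ext ω
    simp [nPts_compl_eq_zero_iff]
  rw [hpre, ← Measure.map_apply (hη.measurable_count _ hC.compl) (measurableSet_singleton 0),
    hη.poisson_count _ hC.compl, poissonMeasure_singleton]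
  simp [ENNReal.coe_toNNReal_eq_toReal]

/-- Configurations are sets, so a Poisson process on the one-point space `Euc 0` cannot have two
points at the atom: its intensity has to vanish. -/
theorem IsPoissonPP.measure_univ_toReal_eq_zero_of_dim_zero {ν : Measure (Euc 0)}
    {η : Ω → Finset (Euc 0)} (hη : IsPoissonPP P ν η) : (ν Set.univ).toReal = 0 := by
  have hcount (ω : Ω) : nPts (η ω) Set.univ ≠ 2 := by
    have : Subsingleton (Euc 0) := ⟨fun a b => PiLp.ext fun i => i.elim0⟩
    have := (Set.ncard_le_one (Set.toFinite ((η ω : Set (Euc 0)) ∩ Set.univ))).mpr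
      fun a _ b _ => Subsingleton.elim a b
    exact (this.trans_lt one_lt_two).ne
  have htwo : Measure.map (fun ω => nPts (η ω) Set.univ) P {2} = 0 := by
    rw [Measure.map_apply (hη.measurable_count _ MeasurableSet.univ) (measurableSet_singleton 2)]
    exact measure_mono_null (fun ω hω => hcount ω hω) measure_empty
  rw [hη.poisson_count _ MeasurableSet.univ, poissonMeasure_singleton, ENNReal.ofReal_eq_zero]
    at htwo
  by_contra hν
  have hr : (0 : ℝ) < (ν Set.univ).toNNReal := lt_of_le_of_ne ENNReal.toReal_nonneg (Ne.symm hν)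
  have := pow_pos hr 2
  exact htwo.not_gt (by positivity)

/-- Unlike the instance `⊤` on `Finset (Euc d)`, this σ-algebra makes point processes measurable,
so that the joint law of two of them can be disintegrated. -/
abbrev containmentSpace (d : ℕ) : MeasurableSpace (Finset (Euc d)) :=
  MeasurableSpace.generateFrom
    {S | ∃ C, MeasurableSet C ∧ S = {ξ : Finset (Euc d) | (ξ : Set (Euc d)) ⊆ C}}

theorem measurableSet_containmentSpace_subset {C : Set (Euc d)} (hC : MeasurableSet C) :
    MeasurableSet[containmentSpace d] {ξ | (ξ : Set (Euc d)) ⊆ C} :=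
  MeasurableSpace.measurableSet_generateFrom ⟨C, hC, rfl⟩

theorem IsPoissonPP.measurable_containmentSpace (hη : IsPoissonPP P ν η) :
    Measurable[mΩ, containmentSpace d] η := by
  refine measurable_generateFrom ?_
  rintro _ ⟨C, hC, rfl⟩
  simp_rw [Set.preimage_ofPred_eq, ← nPts_compl_eq_zero_iff]
  exact hη.measurable_count _ hC.compl (measurableSet_singleton 0)

theorem measurableSet_containmentSpace_subset_hull (K : Set (Euc d)) :
    MeasurableSet[containmentSpace d] {a | K ⊆ hull a} := by
  have hK : {a | K ⊆ hull a} = ⋂ (i) (_ : ¬ K ⊆ denseHalfSpace (Euc d) i),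
      {a : Finset (Euc d) | (a : Set (Euc d)) ⊆ denseHalfSpace (Euc d) i}ᶜ := by
    ext a
    simp only [hull, subset_convexHull_iff_forall_denseHalfSpace a.finite_toSet, Set.mem_iInter,
      Set.mem_ofPred_eq, Set.mem_compl_iff]
    exact forall_congr' fun i => not_imp_not.symm
  rw [hK]
  exact .iInter fun i => .iInter fun _ =>
    (measurableSet_containmentSpace_subset (isClosed_denseHalfSpace i).measurableSet).compl

theorem measurableSet_containmentSpace_subset_hull_prod :
    MeasurableSet[(containmentSpace d).prod (containmentSpace d)]
      {p : Finset (Euc d) × Finset (Euc d) | (p.2 : Set (Euc d)) ⊆ hull p.1} := by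
  let := containmentSpace d
  have hmeas (i : ℕ) :
      MeasurableSet {a : Finset (Euc d) | (a : Set (Euc d)) ⊆ denseHalfSpace (Euc d) i} :=
    measurableSet_containmentSpace_subset (isClosed_denseHalfSpace i).measurableSet
  have hS : {p : Finset (Euc d) × Finset (Euc d) | (p.2 : Set (Euc d)) ⊆ hull p.1} =
      ⋂ i, ({a : Finset (Euc d) | (a : Set (Euc d)) ⊆ denseHalfSpace (Euc d) i}ᶜ ×ˢ Set.univ ∪
        Set.univ ×ˢ {b : Finset (Euc d) | (b : Set (Euc d)) ⊆ denseHalfSpace (Euc d) i}) := by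
    ext ⟨a, b⟩
    simp only [hull, subset_convexHull_iff_forall_denseHalfSpace a.finite_toSet, Set.mem_iInter,
      Set.mem_ofPred_eq, Set.mem_union, Set.mem_prod, Set.mem_compl_iff, Set.mem_univ, and_true,
      true_and]
    exact forall_congr' fun i => imp_iff_not_or
  rw [hS]
  exact .iInter fun i => ((hmeas i).compl.prod .univ).union (MeasurableSet.univ.prod (hmeas i))

open TopologicalSpace in
theorem measurableSet_containmentSpace_subset_interior_hull_prod :
    MeasurableSet[(containmentSpace d).prod (containmentSpace d)]
      {p : Finset (Euc d) × Finset (Euc d) | (p.2 : Set (Euc d)) ⊆ interior (hull p.1)} := by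
  let := containmentSpace d
  have hS : {p : Finset (Euc d) × Finset (Euc d) | (p.2 : Set (Euc d)) ⊆ interior (hull p.1)} =
      ⋃ T ∈ {T | T.Finite ∧ T ⊆ countableBasis (Euc d)},
        {a | ⋃₀ T ⊆ hull a} ×ˢ {b : Finset (Euc d) | (b : Set (Euc d)) ⊆ ⋃₀ T} := by
    ext ⟨a, b⟩
    simp only [Set.mem_ofPred_eq, Set.mem_iUnion, Set.mem_prod, exists_prop]
    constructor
    · intro hb
      obtain ⟨T, hTB, hTfin, hbT, hTa⟩ :=
        (isBasis_countableBasis (Euc d)).exists_finite_sUnion_between b.finite_toSet.isCompact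
          isOpen_interior hb
      exact ⟨T, ⟨hTfin, hTB⟩, hTa.trans interior_subset, hbT⟩
    · rintro ⟨T, ⟨-, hTB⟩, hTa, hbT⟩
      exact hbT.trans (interior_maximal hTa
        (isOpen_sUnion fun u hu => isOpen_of_mem_countableBasis (hTB hu)))
  rw [hS]
  exact .biUnion (Set.countable_ofPred_finite_subset (countable_countableBasis (Euc d)))
    fun T hT => (measurableSet_containmentSpace_subset_hull _).prod
      (measurableSet_containmentSpace_subset (isOpen_sUnion fun u hu =>
        isOpen_of_mem_countableBasis (hT.2 hu)).measurableSet)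

theorem IsPoissonPP.measureReal_subset_eq_integral [IsFiniteMeasure P]
    {η₁ η₂ : Ω → Finset (Euc d)} (hη₁ : Measurable[mΩ, containmentSpace d] η₁)
    (hη₂ : IsPoissonPP P ν η₂) (hind : IndepFun η₁ η₂ P) {C : Finset (Euc d) → Set (Euc d)}
    (hC : ∀ a, MeasurableSet (C a))
    (hS : MeasurableSet[(containmentSpace d).prod (containmentSpace d)]
      {p : Finset (Euc d) × Finset (Euc d) | (p.2 : Set (Euc d)) ⊆ C p.1}) :
    P.real {ω | (η₂ ω : Set (Euc d)) ⊆ C (η₁ ω)} =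
      ∫ ω, Real.exp (-(ν (C (η₁ ω))ᶜ).toReal) ∂P := by
  -- The local instance takes precedence over `⊤`, to which `hind` refers.
  let := containmentSpace d
  have hind' : IndepFun η₁ η₂ P :=
    hind.comp (φ := id) (ψ := id) (measurable_id'' le_top) (measurable_id'' le_top)
  have hη₂' := hη₂.measurable_containmentSpace
  have hsection (ω : Ω) : P {ω' | (η₂ ω' : Set (Euc d)) ⊆ C (η₁ ω)} =
      ENNReal.ofReal (Real.exp (-(ν (C (η₁ ω))ᶜ).toReal)) :=
    hη₂.measure_subset (hC _)
  have hmeas : Measurable fun ω => Real.exp (-(ν (C (η₁ ω))ᶜ).toReal) := by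
    have := (measurable_measure_prodMk_mem (P := P) hη₁ hη₂' hS).ennreal_toReal
    simpa only [Set.mem_ofPred_eq, hsection, ENNReal.toReal_ofReal (Real.exp_nonneg _)]
      using this
  rw [integral_eq_lintegral_of_nonneg_ae (.of_forall fun _ => Real.exp_nonneg _)
    hmeas.aestronglyMeasurable, measureReal_def]
  have := hind'.measure_mem_eq_lintegral hη₁ hη₂' hS
  simp only [Set.mem_ofPred_eq, hsection] at this
  exact congrArg ENNReal.toReal this

end PointProcess

theorem toReal_ofReal_smul_measure_compl {α : Type*} [MeasurableSpace α] {μ : Measure α}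
    [IsProbabilityMeasure μ] {c : ℝ} (hc : 0 ≤ c) {C : Set α} (hC : MeasurableSet C) :
    ((ENNReal.ofReal c • μ) Cᶜ).toReal = c * (1 - (μ C).toReal) := by
  rw [Measure.smul_apply, smul_eq_mul, ENNReal.toReal_mul, prob_compl_eq_one_sub hC,
    ENNReal.toReal_ofReal hc, ENNReal.toReal_sub_of_le prob_le_one ENNReal.one_ne_top,
    ENNReal.toReal_one]

/-- Splitting step in the proof of Theorem 4 (Beermann–Reitzner): if `η_{xt}` and `η̄_{yt}`
are independent Poisson point processes with intensity measures `xtμ` and `ytμ`,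
`x + y = 1`, then the probability that all vertices of the convex hull of the superposition
`η_{xt} + η̄_{yt}` belong to `η_{xt}` equals `E[e^{-yt Δ(Π_{xt})}]`, where
`Δ(Π_{xt}) = 1 - μ(Π_{xt})`. -/
theorem prob_vertices_from_first_process
    {d : ℕ} {Ω : Type*} [MeasurableSpace Ω] (P : Measure Ω) [IsProbabilityMeasure P]
    (μ : Measure (Euc d)) [IsProbabilityMeasure μ] (hac : μ ≪ volume)
    (t : ℝ) (ht : 0 < t) (x y : ℝ) (hx : 0 ≤ x) (hy : 0 ≤ y) (hxy : x + y = 1)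
    (η₁ η₂ : Ω → Finset (Euc d))
    (hη₁ : IsPoissonPP P (ENNReal.ofReal (x * t) • μ) η₁)
    (hη₂ : IsPoissonPP P (ENNReal.ofReal (y * t) • μ) η₂)
    (hind : IndepFun η₁ η₂ P) :
    (P {ω | ∀ p ∈ (η₁ ω : Set (Euc d)) ∪ (η₂ ω : Set (Euc d)),
        p ∉ interior (convexHull ℝ ((η₁ ω : Set (Euc d)) ∪ (η₂ ω : Set (Euc d)))) →
        p ∈ η₁ ω}).toReal
      = ∫ ω, Real.exp (-(y * t) * (1 - (μ (hull (η₁ ω))).toReal)) ∂P := by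
  obtain rfl | hd := Nat.eq_zero_or_pos d
  · have h₁ := hη₁.measure_univ_toReal_eq_zero_of_dim_zero
    have h₂ := hη₂.measure_univ_toReal_eq_zero_of_dim_zero
    simp only [Measure.smul_apply, measure_univ, smul_eq_mul, mul_one,
      ENNReal.toReal_ofReal (mul_nonneg hx ht.le), ENNReal.toReal_ofReal (mul_nonneg hy ht.le)]
      at h₁ h₂
    nlinarith
  have : Nonempty (Fin d) := ⟨⟨0, hd⟩⟩
  have hinner := hη₂.measureReal_subset_eq_integral hη₁.measurable_containmentSpace hind
    (C := fun a => interior (hull a)) (fun _ => isOpen_interior.measurableSet)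
    measurableSet_containmentSpace_subset_interior_hull_prod
  have houter := hη₂.measureReal_subset_eq_integral hη₁.measurable_containmentSpace hind
    (C := hull) (fun a => (isClosed_hull a).measurableSet)
    measurableSet_containmentSpace_subset_hull_prod
  simp only [measure_compl_interior_hull (Measure.smul_absolutelyContinuous.trans hac)] at hinner
  simp only [toReal_ofReal_smul_measure_compl (mul_nonneg hy ht.le) (isClosed_hull _).measurableSet]
    at hinner houter
  rw [← measureReal_def]
  simp only [neg_mul]
  apply le_antisymm
  · rw [← houter]
    exact measureReal_mono fun ω hω =>
      subset_convexHull_of_forall_notMem_interior (η₁ ω).finite_toSet (η₂ ω).finite_toSet hω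
  · rw [← hinner]
    exact measureReal_mono fun ω hω => forall_notMem_interior_of_subset_interior hω
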